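/- arXiv:2603.25911 — 2 statements merged into one kernel-verified Lean document; each statement's English description precedes it below -/
import Mathlib

section
/- Let ρ: ℝ → ℝ be a valid ρ-function with derivative ψ = ρ'. Then for every real s ≠ 0 and every real t, ρ(t) ≤ ρ(s) + (ψ(s)/(2s))·(t² − s²). (Quadratic majorization of a valid ρ-function, the key inequality underlying the descent property of the ROTOT IRLS algorithm.) -/
/-- A valid ρ-function: continuous and differentiable, even, nondecreasing in `|z|`,
vanishing at zero, bounded, and such that `z ↦ ρ (√z)` is concave on `[0, ∞)`. -/
structure IsValidRho (ρ : ℝ → ℝ) : Prop where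
  continuous : Continuous ρ
  differentiable : Differentiable ℝ ρ
  even : ∀ z : ℝ, ρ (-z) = ρ z
  mono_abs : ∀ z w : ℝ, |z| ≤ |w| → ρ z ≤ ρ w
  map_zero : ρ 0 = 0
  bounded : ∃ M : ℝ, ∀ z : ℝ, ρ z ≤ M
  sqrt_concave : ConcaveOn ℝ (Set.Ici (0 : ℝ)) (fun z => ρ (Real.sqrt z))

/-- The derivative of an even differentiable function is odd. -/
lemma deriv_even_neg {ρ : ℝ → ℝ} (hd : Differentiable ℝ ρ)
    (he : ∀ z : ℝ, ρ (-z) = ρ z) (z : ℝ) : deriv ρ z = -deriv ρ (-z) := by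
  have h1 : HasDerivAt (fun x : ℝ => ρ (-x)) (deriv ρ (-z) * (-1)) z := by
    exact (hd (-z)).hasDerivAt.comp z (hasDerivAt_neg z)
  have h2 : (fun x : ℝ => ρ (-x)) = ρ := funext he
  rw [h2] at h1
  rw [h1.deriv]; ring

/-- Quadratic majorization of a valid ρ-function: for every `s ≠ 0` and every `t`,
`ρ t ≤ ρ s + (ψ s / (2 s)) (t² − s²)`, where `ψ = ρ'`. -/
theorem rho_quadratic_majorization (ρ : ℝ → ℝ) (hρ : IsValidRho ρ)
    (s : ℝ) (hs : s ≠ 0) (t : ℝ) :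
    ρ t ≤ ρ s + (deriv ρ s / (2 * s)) * (t ^ 2 - s ^ 2) := by
  set g : ℝ → ℝ := fun z => ρ (Real.sqrt z) with hg
  set d : ℝ := deriv ρ s / (2 * s) with hd
  have hs2 : (0 : ℝ) < s ^ 2 := by positivity
  -- ρ of |x| equals ρ x
  have habs : ∀ x : ℝ, ρ |x| = ρ x := by
    intro x
    rcases abs_choice x with h | h
    · rw [h]
    · rw [h, hρ.even]
  have hgt : g (t ^ 2) = ρ t := by
    simp only [hg, Real.sqrt_sq_eq_abs, habs]
  have hgs : g (s ^ 2) = ρ s := by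
    simp only [hg, Real.sqrt_sq_eq_abs, habs]
  -- derivative of g at s²
  have hder : HasDerivAt g d (s ^ 2) := by
    have hsq : HasDerivAt Real.sqrt (1 / (2 * Real.sqrt (s ^ 2))) (s ^ 2) :=
      Real.hasDerivAt_sqrt (ne_of_gt hs2)
    have hmain : HasDerivAt g (deriv ρ (Real.sqrt (s ^ 2)) * (1 / (2 * Real.sqrt (s ^ 2))))
        (s ^ 2) := (hρ.differentiable _).hasDerivAt.comp _ hsq
    have hval : deriv ρ (Real.sqrt (s ^ 2)) * (1 / (2 * Real.sqrt (s ^ 2))) = d := by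
      rw [Real.sqrt_sq_eq_abs, hd]
      rcases abs_choice s with h | h
      · rw [h]; ring
      · rw [h, deriv_even_neg hρ.differentiable hρ.even (-s), neg_neg]
        field_simp
    rwa [hval] at hmain
  -- membership
  have hts : (t ^ 2 : ℝ) ∈ Set.Ici (0 : ℝ) := sq_nonneg t
  have hss : (s ^ 2 : ℝ) ∈ Set.Ici (0 : ℝ) := le_of_lt hs2
  rcases lt_trichotomy (t ^ 2) (s ^ 2) with h | h | h
  · -- t² < s² : d ≤ slope g t² s²
    have hsl := hρ.sqrt_concave.le_slope_of_hasDerivAt hts hss h hder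
    rw [slope_def_field, le_div_iff₀ (by linarith : (0:ℝ) < s ^ 2 - t ^ 2)] at hsl
    simp only [Real.sqrt_sq_eq_abs, habs] at hsl
    nlinarith [hsl]
  · -- equal
    have h1 : ρ t ≤ ρ s := hρ.mono_abs t s (by nlinarith [abs_nonneg t, abs_nonneg s, sq_abs t, sq_abs s])
    rw [show t ^ 2 - s ^ 2 = 0 by linarith]
    linarith
  · -- s² < t² : slope ≤ d
    have hsl := hρ.sqrt_concave.slope_le_of_hasDerivAt hss hts h hder
    rw [slope_def_field, div_le_iff₀ (by linarith : (0:ℝ) < t ^ 2 - s ^ 2)] at hsl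
    simp only [Real.sqrt_sq_eq_abs, habs] at hsl
    linarith
end

section
/- Let ρ₁, ρ₂ be valid ρ-functions with derivatives ψ₁, ψ₂. Under the residual-form ROTOT setup, fix reals y_{nj} and f_{nj} for all n, j, and for b ∈ ℝ^J define the residuals r_{nj}(b) := y_{nj} − b_j − f_{nj} and G(b) := L(r(b)). Fix b ∈ ℝ^J such that D_n(r(b)) > 0 for every n. Then for each j ∈ {1,…,J}, the partial derivative of G with respect to b_j at b exists and equals −(1/(2m)) Σ_{n=1}^N a_n m_{nj} · (σ₂ ψ₂(D_n(r(b))/σ₂)/D_n(r(b))) · σ_j ψ₁(r_{nj}(b)/σ_j). (This is the gradient computation behind the first-order condition for the intercept in the ROTOT objective.) -/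
open Finset

/-- Casewise deviation `D_n(r) = √( (1/m_n) Σ_j m_{nj} σ_j² ρ₁(r_{nj}/σ_j) )`. -/
noncomputable def Dn (ρ₁ : ℝ → ℝ) {N J : ℕ} (mk : Fin N → Fin J → ℝ)
    (σ : Fin J → ℝ) (r : Fin N → Fin J → ℝ) (n : Fin N) : ℝ :=
  Real.sqrt ((1 / ∑ j, mk n j) * ∑ j, mk n j * (σ j) ^ 2 * ρ₁ (r n j / σ j))

/-- ROTOT objective `L(r) = (σ₂²/m) Σ_n m_n a_n ρ₂(D_n(r)/σ₂)`. -/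
noncomputable def Lobj (ρ₁ ρ₂ : ℝ → ℝ) {N J : ℕ} (mk : Fin N → Fin J → ℝ)
    (a : Fin N → ℝ) (σ : Fin J → ℝ) (σ₂ : ℝ) (r : Fin N → Fin J → ℝ) : ℝ :=
  (σ₂ ^ 2 / ∑ n, ∑ j, mk n j) *
    ∑ n, (∑ j, mk n j) * a n * ρ₂ (Dn ρ₁ mk σ r n / σ₂)

/-!
Chain rule. Moving `b_j` moves only the `j`-th residual of each case, at speed `-1`; since
`D_n > 0` the square root is differentiable there, so `D_n` has derivative
`-(1/m_n) m_{nj} σ_j ψ₁(r_{nj}/σ_j) / (2 D_n)`, and the weight `m_n` of case `n` in `L` cancels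
the `1/m_n`.
-/

section Derivatives

variable {ρ₁ ρ₂ : ℝ → ℝ} {N J : ℕ} {mk : Fin N → Fin J → ℝ} {σ : Fin J → ℝ}
  {r : ℝ → Fin N → Fin J → ℝ} {r' : Fin J → ℝ} {x : ℝ}

theorem hasDerivAt_Dn (hρ₁ : Differentiable ℝ ρ₁) (n : Fin N)
    (hr : ∀ j, HasDerivAt (fun t => r t n j) (r' j) x) (hD : Dn ρ₁ mk σ (r x) n ≠ 0) :
    HasDerivAt (fun t => Dn ρ₁ mk σ (r t) n)
      ((1 / ∑ j, mk n j) * (∑ j, mk n j * σ j ^ 2 * (deriv ρ₁ (r x n j / σ j) * (r' j / σ j)))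
        / (2 * Dn ρ₁ mk σ (r x) n)) x := by
  have hinner := HasDerivAt.fun_sum (u := univ) fun j _ =>
    (((hρ₁ _).hasDerivAt.comp x ((hr j).div_const (σ j))).const_mul (mk n j * σ j ^ 2))
  refine (hinner.const_mul _).sqrt fun h0 => hD ?_
  rw [Dn, ← Real.sqrt_zero]
  exact congrArg _ h0

theorem hasDerivAt_Lobj (hρ₂ : Differentiable ℝ ρ₂) (a : Fin N → ℝ) (σ₂ : ℝ) {D' : Fin N → ℝ}
    (hDn : ∀ n, HasDerivAt (fun t => Dn ρ₁ mk σ (r t) n) (D' n) x) :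
    HasDerivAt (fun t => Lobj ρ₁ ρ₂ mk a σ σ₂ (r t))
      ((σ₂ ^ 2 / ∑ n, ∑ j, mk n j) *
        ∑ n, (∑ j, mk n j) * a n * (deriv ρ₂ (Dn ρ₁ mk σ (r x) n / σ₂) * (D' n / σ₂))) x :=
  (HasDerivAt.fun_sum fun n _ =>
    ((hρ₂ _).hasDerivAt.comp x ((hDn n).div_const σ₂)).const_mul _).const_mul _

end Derivatives

theorem intercept_gradient_general
    (ρ₁ ρ₂ : ℝ → ℝ) (h₁ : IsValidRho ρ₁) (h₂ : IsValidRho ρ₂)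
    (N J : ℕ)
    (mk : Fin N → Fin J → ℝ)
    (a : Fin N → ℝ)
    (σ : Fin J → ℝ)
    (σ₂ : ℝ)
    (y f : Fin N → Fin J → ℝ)
    (res : (Fin J → ℝ) → Fin N → Fin J → ℝ)
    (hres : ∀ (b : Fin J → ℝ) (n : Fin N) (j : Fin J), res b n j = y n j - b j - f n j)
    (b : Fin J → ℝ)
    (hD : ∀ n, 0 < Dn ρ₁ mk σ (res b) n)
    (j : Fin J) :
    HasDerivAt
      (fun x : ℝ => Lobj ρ₁ ρ₂ mk a σ σ₂ (res (Function.update b j x)))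
      (-(1 / (2 * ∑ n, ∑ j', mk n j')) *
        ∑ n, a n * mk n j *
          (σ₂ * deriv ρ₂ (Dn ρ₁ mk σ (res b) n / σ₂) / Dn ρ₁ mk σ (res b) n) *
          (σ j * deriv ρ₁ (res b n j / σ j)))
      (b j) := by
  have hr : ∀ n i, HasDerivAt (fun t => res (Function.update b j t) n i)
      (-(Pi.single j 1 : Fin J → ℝ) i) (b j) := by
    intro n i
    simp only [hres]
    exact ((hasDerivAt_pi.mp (hasDerivAt_update b j (b j)) i).const_sub _).sub_const _
  have hb : res (Function.update b j (b j)) = res b := by rw [Function.update_eq_self]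
  -- `m_n = 0` would force `D_n = √(0⁻¹ * _) = 0`.
  have hmn : ∀ n, ∑ i, mk n i ≠ 0 := fun n h0 => (hD n).ne' (by simp [Dn, h0])
  have hsum_single : ∀ n, ∑ i, mk n i * σ i ^ 2 *
      (deriv ρ₁ (res b n i / σ i) * (-(Pi.single j 1 : Fin J → ℝ) i / σ i)) =
      mk n j * σ j ^ 2 * (deriv ρ₁ (res b n j / σ j) * (-1 / σ j)) := by
    intro n
    simp [Pi.single_apply, apply_ite, ite_div]
  have hL := hasDerivAt_Lobj h₂.differentiable a σ₂ fun n =>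
    hasDerivAt_Dn h₁.differentiable n (hr n) (by rw [hb]; exact (hD n).ne')
  rw [hb] at hL
  convert hL using 1
  -- keeps `mul_sum` from rewriting `2 * m`
  generalize (∑ n, ∑ j', mk n j') = M
  rw [Finset.mul_sum, Finset.mul_sum]
  refine Finset.sum_congr rfl fun n _ => ?_
  rw [hsum_single n]
  field_simp [hmn n]

/-- The partial derivative of the ROTOT objective with respect to the `j`-th
intercept coordinate `b_j` equals
`−(1/(2m)) Σ_n a_n m_{nj} (σ₂ ψ₂(D_n/σ₂)/D_n) σ_j ψ₁(r_{nj}/σ_j)`. -/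
theorem intercept_gradient
    (ρ₁ ρ₂ : ℝ → ℝ) (h₁ : IsValidRho ρ₁) (h₂ : IsValidRho ρ₂)
    (N J : ℕ) (hN : 1 ≤ N) (hJ : 1 ≤ J)
    (mk : Fin N → Fin J → ℝ) (hmk : ∀ n j, mk n j = 0 ∨ mk n j = 1)
    (hmn : ∀ n, 0 < ∑ j, mk n j)
    (a : Fin N → ℝ) (ha : ∀ n, 0 ≤ a n ∧ a n ≤ 1)
    (σ : Fin J → ℝ) (hσ : ∀ j, 0 < σ j)
    (σ₂ : ℝ) (hσ₂ : 0 < σ₂)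
    (y f : Fin N → Fin J → ℝ)
    (res : (Fin J → ℝ) → Fin N → Fin J → ℝ)
    (hres : ∀ (b : Fin J → ℝ) (n : Fin N) (j : Fin J), res b n j = y n j - b j - f n j)
    (b : Fin J → ℝ)
    (hD : ∀ n, 0 < Dn ρ₁ mk σ (res b) n)
    (j : Fin J) :
    HasDerivAt
      (fun x : ℝ => Lobj ρ₁ ρ₂ mk a σ σ₂ (res (Function.update b j x)))
      (-(1 / (2 * ∑ n, ∑ j', mk n j')) *
        ∑ n, a n * mk n j *
          (σ₂ * deriv ρ₂ (Dn ρ₁ mk σ (res b) n / σ₂) / Dn ρ₁ mk σ (res b) n) *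
          (σ j * deriv ρ₁ (res b n j / σ j)))
      (b j) :=
  intercept_gradient_general ρ₁ ρ₂ h₁ h₂ N J mk a σ σ₂ y f res hres b hD j
end
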